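/- arXiv:1512.05876 — 3 statements merged into one kernel-verified Lean document; each statement's English description precedes it below -/
import Mathlib

section
/- Let G be a connected bipartite graph with bipartition (X, Y), no sibling pairs, |X| ≥ 2, |Y| ≥ 2, and n = |X| + |Y| vertices, and let k be a natural number. Then the number of layouts f_X on X for which there exists a layout f_Y on Y such that the two-layer drawing (f_X, f_Y) has at most k crossings is at most n · 2^{4k + 3n - 4}. -/
open Finset

variable {X Y : Type} [Fintype X] [Fintype Y] [DecidableEq X] [DecidableEq Y]

/-- The adjacency relation on `X ⊕ Y` induced by an edge set `E ⊆ X × Y`. -/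
def biAdj (E : Finset (X × Y)) : X ⊕ Y → X ⊕ Y → Prop
  | Sum.inl x, Sum.inr y => (x, y) ∈ E
  | Sum.inr y, Sum.inl x => (x, y) ∈ E
  | _, _ => False

/-- The bipartite graph with parts `X`, `Y` and edge set `E`, as a simple graph on `X ⊕ Y`. -/
def biGraph (E : Finset (X × Y)) : SimpleGraph (X ⊕ Y) where
  Adj := biAdj E
  symm := ⟨by rintro (x | y) (x' | y') h <;> simp_all [biAdj]⟩
  loopless := ⟨by rintro (x | y) h <;> simp_all [biAdj]⟩

instance (E : Finset (X × Y)) : DecidableRel (biGraph E).Adj := fun u v =>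
  match u, v with
  | Sum.inl x, Sum.inr y => (inferInstance : Decidable ((x, y) ∈ E))
  | Sum.inr y, Sum.inl x => (inferInstance : Decidable ((x, y) ∈ E))
  | Sum.inl _, Sum.inl _ => .isFalse (by simp [biGraph, biAdj])
  | Sum.inr _, Sum.inr _ => .isFalse (by simp [biGraph, biAdj])

/-- The crossing number of the two-layer drawing `(fX, fY)` of the bipartite graph
with edge set `E`: the number of pairs of edges `(x, y)`, `(x', y')` with
`fX x < fX x'` and `fY y' < fY y`. -/
def crossNum (E : Finset (X × Y)) (fX : X ≃ Fin (Fintype.card X))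
    (fY : Y ≃ Fin (Fintype.card Y)) : ℕ :=
  ((E ×ˢ E).filter fun p => fX p.1.1 < fX p.2.1 ∧ fY p.2.2 < fY p.1.2).card

/-- A leaf is a vertex of degree one. -/
def IsLeaf (E : Finset (X × Y)) (v : X ⊕ Y) : Prop := (biGraph E).degree v = 1

/-- `G` has no sibling pairs: no two distinct leaves have a common neighbor. -/
def NoSiblingPairs (E : Finset (X × Y)) : Prop :=
  ∀ u v : X ⊕ Y, u ≠ v → IsLeaf E u → IsLeaf E v →
    ∀ w, ¬ ((biGraph E).Adj u w ∧ (biGraph E).Adj v w)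

/-- The bipartite crossing number: the minimum crossing number over all two-layer drawings. -/
noncomputable def bcr (E : Finset (X × Y)) : ℕ :=
  sInf {k | ∃ fX fY, crossNum E fX fY = k}

/-!
Fix the vertex `r` that `f_X` puts first and enumerate all vertices by breadth-first search from
`r`, so that every other vertex `v` has a parent: a neighbour enumerated earlier. A drawing gives
`v` a branch type, recording whether `v` has a neighbour to the right of its parent, only ones to
the left, or none besides it, and hence a canonical order on each layer: by position of the
parent, then by branch type, then by a fixed tie-break. Only positions of earlier vertices enter
the canonical rank of `v` among the earlier vertices of its layer, so `f_X` is determined by `r`,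
the `n - 1` branch types and the differences between true and canonical ranks. Such a difference
is at most the number of pairs that the two orders rank oppositely, and each of these pairs is
the pair of `X`-endpoints or of `Y`-endpoints of a crossing: the only exception, two leaves with
a common parent, is excluded by the absence of sibling pairs. Hence the differences have absolute
values summing to at most `2k`; they vanish at the first vertex of each layer, and a
stars-and-bars count of the other `n - 2` gives the bound `|X| · 3^(n-1) · 2^(n-2+4k)`.
-/

theorem Finset.natAbs_card_filter_sub_card_filter_le {α : Type*} (t : Finset α) (p q : α → Prop)
    [DecidablePred p] [DecidablePred q] :
    ((#{x ∈ t | p x} : ℤ) - #{x ∈ t | q x}).natAbs ≤ #{x ∈ t | ¬(p x ↔ q x)} := by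
  have hp := card_filter_add_card_filter_not (s := {x ∈ t | p x}) (p := q)
  have hq := card_filter_add_card_filter_not (s := {x ∈ t | q x}) (p := p)
  simp only [filter_filter] at hp hq
  have hpq : #{x ∈ t | p x ∧ ¬q x} ≤ #{x ∈ t | ¬(p x ↔ q x)} :=
    card_le_card (monotone_filter_right _ fun x h => by tauto)
  have hqp : #{x ∈ t | q x ∧ ¬p x} ≤ #{x ∈ t | ¬(p x ↔ q x)} :=
    card_le_card (monotone_filter_right _ fun x h => by tauto)
  have hcomm : #{x ∈ t | q x ∧ p x} = #{x ∈ t | p x ∧ q x} := by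
    simp only [and_comm]
  omega

theorem Finset.lt_iff_card_filter_lt_lt {α L : Type*} [LinearOrder L] {t : Finset α} {P : α → L}
    {v w : α} (hw : w ∈ t) (hne : P w ≠ P v) :
    P w < P v ↔ #{u ∈ t | P u < P w} < #{u ∈ t | P u < P v} := by
  constructor
  · intro hlt
    refine card_lt_card ⟨fun u hu => ?_, fun hsub => ?_⟩
    · simp only [mem_filter] at hu ⊢
      exact ⟨hu.1, hu.2.trans hlt⟩
    · simpa using (mem_filter.mp (hsub (mem_filter.mpr ⟨hw, hlt⟩))).2
  · intro hcard
    by_contra hnot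
    have hgt : P v < P w := lt_of_le_of_ne (not_lt.mp hnot) hne.symm
    refine hcard.not_ge (card_le_card fun u hu => ?_)
    simp only [mem_filter] at hu ⊢
    exact ⟨hu.1, hu.2.trans hgt⟩

theorem Finset.card_le_two_pow_of_sum_le {ι : Type*} [Fintype ι] [DecidableEq ι] {t : ℕ}
    (A : Finset (ι → ℕ)) (hA : ∀ u ∈ A, ∑ i, u i ≤ t) : #A ≤ 2 ^ (Fintype.card ι + t) := by
  let stars : (ι → ℕ) → Multiset (Option ι) := fun u =>
    Multiset.replicate (t - ∑ i, u i) none + ∑ i, Multiset.replicate (u i) (some i)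
  have count_stars : ∀ u i, (stars u).count (some i) = u i := by
    intro u i
    simp [stars, Multiset.count_sum', Multiset.count_replicate]
  have card_stars : ∀ u ∈ A, Multiset.card (stars u) = t := by
    intro u hu
    simp only [stars, Multiset.card_add, Multiset.card_replicate, Multiset.card_sum]
    have := hA u hu
    omega
  calc #A ≤ #((univ : Finset (Sym (Option ι) t)).image (↑)) :=
        card_le_card_of_injOn stars
          (fun u hu => mem_image.mpr ⟨⟨stars u, card_stars u hu⟩, mem_univ _, rfl⟩)
          (fun u _ u' _ h => funext fun i => by rw [← count_stars u, ← count_stars u', h])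
    _ ≤ Fintype.card (Sym (Option ι) t) := card_image_le
    _ = (Fintype.card ι + t).choose t := by
        rw [Sym.card_sym_eq_choose, Fintype.card_option, Nat.add_right_comm, Nat.add_sub_cancel]
    _ ≤ 2 ^ (Fintype.card ι + t) := Nat.choose_le_two_pow _ _

theorem Equiv.eq_of_lt_iff_lt {α : Type*} {n : ℕ} {f g : α ≃ Fin n}
    (h : ∀ a b, f a < f b ↔ g a < g b) : f = g := by
  have hmono : StrictMono (g ∘ f.symm) := fun i j hij => by
    simpa using (h (f.symm i) (f.symm j)).mp (by simpa using hij)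
  ext a
  simpa using (congrArg Fin.val (congrFun hmono.eq_id (f a))).symm

theorem SimpleGraph.Connected.exists_adj_dist_lt {V : Type*} {G : SimpleGraph V}
    (hG : G.Connected) {v r : V} (hv : v ≠ r) : ∃ u, G.Adj v u ∧ G.dist u r < G.dist v r := by
  obtain ⟨p, hp⟩ := hG.exists_walk_length_eq_dist v r
  cases p with
  | nil => exact absurd rfl hv
  | cons hadj q =>
    refine ⟨_, hadj, (SimpleGraph.dist_le q).trans_lt ?_⟩
    rw [← hp, SimpleGraph.Walk.length_cons]
    omega

namespace TwoLayer

def zigzag (z : ℤ) : ℕ := if 0 ≤ z then 2 * z.toNat else 2 * z.natAbs - 1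

theorem zigzag_injective : Function.Injective zigzag := by
  intro a b h
  unfold zigzag at h
  split_ifs at h <;> omega

theorem zigzag_le (z : ℤ) : zigzag z ≤ 2 * z.natAbs := by
  unfold zigzag
  split_ifs <;> omega

section Concordance

variable {V S K : Type*} [Fintype V] [DecidableEq S] [LinearOrder K]
  (κ : V → K) (s : V → S)

def peersBefore (v : V) : Finset V := {w | s w = s v ∧ κ w < κ v}

def rankAmong {L : Type*} [LinearOrder L] (P : V → L) (v : V) : ℕ :=
  #{w ∈ peersBefore κ s v | P w < P v}

def discordantPairs {L M : Type*} [LinearOrder L] [LinearOrder M] (P : V → L) (Q : V → M) :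
    Finset (V × V) :=
  {p | s p.1 = s p.2 ∧ Q p.1 < Q p.2 ∧ P p.2 < P p.1}

variable {κ s}

theorem mem_peersBefore {v w : V} : w ∈ peersBefore κ s v ↔ s w = s v ∧ κ w < κ v := by
  simp [peersBefore]

theorem exists_peersBefore_eq_empty (v : V) : ∃ m, s m = s v ∧ peersBefore κ s m = ∅ := by
  obtain ⟨m, hm, hmin⟩ := exists_min_image {w | s w = s v} κ ⟨v, by simp⟩
  have hmv : s m = s v := (mem_filter.mp hm).2
  refine ⟨m, hmv, eq_empty_of_forall_notMem fun w hw => ?_⟩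
  rw [mem_peersBefore] at hw
  exact (hmin w (by simpa [hmv] using hw.1)).not_gt hw.2

theorem card_peersBefore_nonempty_le [DecidableEq V] {a b : V} (hab : s a ≠ s b) :
    Fintype.card {v // (peersBefore κ s v).Nonempty} ≤ Fintype.card V - 2 := by
  obtain ⟨ma, hma, hma'⟩ := exists_peersBefore_eq_empty (κ := κ) (s := s) a
  obtain ⟨mb, hmb, hmb'⟩ := exists_peersBefore_eq_empty (κ := κ) (s := s) b
  have hne : ma ≠ mb := fun h => hab (by rw [← hma, ← hmb, h])
  rw [Fintype.card_subtype]
  calc #{v | (peersBefore κ s v).Nonempty} ≤ #((univ.erase ma).erase mb) :=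
        card_le_card fun v hv => by
          simp only [mem_filter, mem_univ, true_and] at hv
          simp only [mem_erase, mem_univ, and_true]
          exact ⟨fun h => by simp [h, hmb'] at hv, fun h => by simp [h, hma'] at hv⟩
    _ = Fintype.card V - 2 := by
        rw [card_erase_of_mem (s := univ.erase ma) (by simp [hne.symm]),
          card_erase_of_mem (mem_univ _), card_univ, Nat.sub_sub]

theorem sum_card_disagree_le_card_discordantPairs {L M : Type*} [LinearOrder L] [LinearOrder M]
    {P : V → L} {Q : V → M} (hP : ∀ a b, s a = s b → P a = P b → a = b)
    (hQ : ∀ a b, s a = s b → Q a = Q b → a = b) :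
    ∑ v, #{w ∈ peersBefore κ s v | ¬(P w < P v ↔ Q w < Q v)} ≤
      #(discordantPairs s P Q) := by
  rw [← card_sigma]
  let orient : (Σ _ : V, V) → V × V := fun x => if Q x.2 < Q x.1 then (x.2, x.1) else (x.1, x.2)
  refine card_le_card_of_injOn orient (fun ⟨v, w⟩ hx => ?_) (fun ⟨v, w⟩ hx ⟨v', w'⟩ hx' h => ?_)
  · simp only [coe_sigma, Set.mem_sigma_iff, coe_univ, Set.mem_univ, true_and, coe_filter,
      mem_peersBefore] at hx
    obtain ⟨⟨hs, hκ⟩, hdis⟩ := hx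
    have hwv : w ≠ v := fun h => (h ▸ hκ).false
    have hPne : P w ≠ P v := fun h => hwv (hP w v hs h)
    have hQne : Q w ≠ Q v := fun h => hwv (hQ w v hs h)
    simp only [discordantPairs, coe_filter, mem_univ, true_and, orient]
    split_ifs with hQlt
    · exact ⟨hs, hQlt, lt_of_le_of_ne (not_lt.mp fun h => hdis (iff_of_true h hQlt)) hPne.symm⟩
    · exact ⟨hs.symm, lt_of_le_of_ne (not_lt.mp hQlt) hQne.symm,
        not_not.mp fun h => hdis (iff_of_false h hQlt)⟩
  · simp only [coe_sigma, Set.mem_sigma_iff, coe_univ, Set.mem_univ, true_and, coe_filter,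
      mem_peersBefore] at hx hx'
    have hκ := hx.1.2
    have hκ' := hx'.1.2
    simp only [orient] at h
    split_ifs at h <;> simp only [Prod.mk.injEq] at h <;> obtain ⟨rfl, rfl⟩ := h
    · rfl
    · exact absurd (hκ.trans hκ') (lt_irrefl _)
    · exact absurd (hκ.trans hκ') (lt_irrefl _)
    · rfl

theorem sum_natAbs_rankAmong_sub_le {L M : Type*} [LinearOrder L] [LinearOrder M]
    {P : V → L} {Q : V → M} (hP : ∀ a b, s a = s b → P a = P b → a = b)
    (hQ : ∀ a b, s a = s b → Q a = Q b → a = b) :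
    ∑ v, ((rankAmong κ s P v : ℤ) - rankAmong κ s Q v).natAbs ≤ #(discordantPairs s P Q) :=
  (sum_le_sum fun _ _ => natAbs_card_filter_sub_card_filter_le _ _ _).trans
    (sum_card_disagree_le_card_discordantPairs hP hQ)

theorem lt_iff_lt_of_forall_rankAmong_eq [WellFoundedLT K] (hκ : Function.Injective κ)
    {L M : Type*} [LinearOrder L] [LinearOrder M]
    {P : V → L} {Q : V → M} (hP : ∀ a b, s a = s b → P a = P b → a = b)
    (hQ : ∀ a b, s a = s b → Q a = Q b → a = b)
    (h : ∀ v, (∀ a b, κ a < κ v → κ b < κ v → s a = s b → (P a < P b ↔ Q a < Q b)) →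
      rankAmong κ s P v = rankAmong κ s Q v)
    {a b : V} (hab : s a = s b) : P a < P b ↔ Q a < Q b := by
  have agree_symm :
      ∀ a b, s a = s b → a ≠ b → (P a < P b ↔ Q a < Q b) → (P b < P a ↔ Q b < Q a) := by
    intro a b hs hne hlt
    have hP' : P b < P a ↔ ¬P a < P b :=
      ⟨fun h => h.not_gt, fun h => lt_of_le_of_ne (not_lt.mp h) fun h => hne (hP a b hs h.symm)⟩
    have hQ' : Q b < Q a ↔ ¬Q a < Q b :=
      ⟨fun h => h.not_gt, fun h => lt_of_le_of_ne (not_lt.mp h) fun h => hne (hQ a b hs h.symm)⟩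
    rw [hP', hQ', hlt]
  have of_before : ∀ a b, s a = s b → (a ∈ peersBefore κ s b → (P a < P b ↔ Q a < Q b)) →
      (b ∈ peersBefore κ s a → (P b < P a ↔ Q b < Q a)) → (P a < P b ↔ Q a < Q b) := by
    intro a b hs hfwd hbwd
    rcases lt_trichotomy (κ a) (κ b) with hlt | heq | hgt
    · exact hfwd (mem_peersBefore.mpr ⟨hs, hlt⟩)
    · obtain rfl := hκ heq
      simp
    · exact agree_symm b a hs.symm (fun h => (h ▸ hgt).false)
        (hbwd (mem_peersBefore.mpr ⟨hs.symm, hgt⟩))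
  have before : ∀ v, ∀ w ∈ peersBefore κ s v, P w < P v ↔ Q w < Q v := by
    intro v
    induction v using (InvImage.wf κ wellFounded_lt).induction with
    | _ v ih =>
      intro w hw
      have earlier : ∀ a b, κ a < κ v → κ b < κ v → s a = s b → (P a < P b ↔ Q a < Q b) :=
        fun a b ha hb hs => of_before a b hs (ih b hb a) (ih a ha b)
      obtain ⟨hs, hκw⟩ := mem_peersBefore.mp hw
      have hwv : w ≠ v := fun h => (h ▸ hκw).false
      rw [lt_iff_card_filter_lt_lt hw fun h => hwv (hP w v hs h),
        lt_iff_card_filter_lt_lt hw fun h => hwv (hQ w v hs h)]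
      have hbelow : #{u ∈ peersBefore κ s v | P u < P w} = #{u ∈ peersBefore κ s v | Q u < Q w} :=
        congrArg card <| filter_congr fun u hu =>
          earlier u w (mem_peersBefore.mp hu).2 hκw ((mem_peersBefore.mp hu).1.trans hs.symm)
      rw [hbelow]
      exact iff_of_eq (congrArg _ (h v earlier))
  exact of_before a b hab (before b a) (before a b)

end Concordance

section Drawing

def layerPos (fX : X ≃ Fin (Fintype.card X)) (fY : Y ≃ Fin (Fintype.card Y)) : X ⊕ Y → ℕ :=
  Sum.elim (fun x => fX x) (fun y => fY y)

def crossedPairs (E : Finset (X × Y)) (fX : X ≃ Fin (Fintype.card X))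
    (fY : Y ≃ Fin (Fintype.card Y)) : Finset ((X ⊕ Y) × (X ⊕ Y)) :=
  {p | p.1.isLeft = p.2.isLeft ∧ layerPos fX fY p.2 < layerPos fX fY p.1 ∧
    ∃ u w, (biGraph E).Adj p.1 u ∧ (biGraph E).Adj p.2 w ∧ layerPos fX fY u < layerPos fX fY w}

variable {fX : X ≃ Fin (Fintype.card X)} {fY : Y ≃ Fin (Fintype.card Y)}

omit [DecidableEq X] [DecidableEq Y] in
theorem layerPos_inj {a b : X ⊕ Y} (hs : a.isLeft = b.isLeft)
    (h : layerPos fX fY a = layerPos fX fY b) : a = b := by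
  cases a <;> cases b <;> simp_all [layerPos, Fin.val_inj]

omit [DecidableEq X] [DecidableEq Y] in
theorem layerPos_eq_iff {a b : X ⊕ Y} (hs : a.isLeft = b.isLeft) :
    layerPos fX fY a = layerPos fX fY b ↔ a = b :=
  ⟨layerPos_inj hs, congrArg _⟩

omit [Fintype X] [Fintype Y] [DecidableEq X] [DecidableEq Y] in
theorem isLeft_eq_of_adj {E : Finset (X × Y)} {a b u w : X ⊕ Y} (hab : a.isLeft = b.isLeft)
    (hu : (biGraph E).Adj a u) (hw : (biGraph E).Adj b w) : u.isLeft = w.isLeft := by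
  cases a <;> cases b <;> cases u <;> cases w <;> simp_all [biGraph, biAdj]

theorem card_crossedPairs_le (E : Finset (X × Y)) :
    #(crossedPairs E fX fY) ≤ 2 * crossNum E fX fY := by
  set C := (E ×ˢ E).filter fun c => fX c.1.1 < fX c.2.1 ∧ fY c.2.2 < fY c.1.2
  -- a crossed pair is the pair of `X`-endpoints or the pair of `Y`-endpoints of a crossing
  have hsub : crossedPairs E fX fY ⊆
      C.image (fun c => (Sum.inl c.2.1, Sum.inl c.1.1)) ∪
        C.image (fun c => (Sum.inr c.1.2, Sum.inr c.2.2)) := by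
    rintro ⟨a | a, b | b⟩ hp <;> simp only [crossedPairs, mem_filter, mem_univ, true_and] at hp <;>
      obtain ⟨hs, hpos, u, w, hu, hw, huw⟩ := hp
    · rcases u with _ | u <;> rcases w with _ | w <;> simp only [biGraph, biAdj] at hu hw
      refine mem_union_left _ (mem_image.mpr ⟨((b, w), (a, u)), ?_, rfl⟩)
      simp only [C, mem_filter, mem_product]
      exact ⟨⟨hw, hu⟩, hpos, huw⟩
    · simp at hs
    · simp at hs
    · rcases u with u | _ <;> rcases w with w | _ <;> simp only [biGraph, biAdj] at hu hw
      refine mem_union_right _ (mem_image.mpr ⟨((u, a), (w, b)), ?_, rfl⟩)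
      simp only [C, mem_filter, mem_product]
      exact ⟨⟨hu, hw⟩, huw, hpos⟩
  calc #(crossedPairs E fX fY) ≤ #C + #C :=
        (card_le_card hsub).trans <|
          (card_union_le _ _).trans (add_le_add card_image_le card_image_le)
    _ = 2 * crossNum E fX fY := by rw [two_mul]; rfl

end Drawing

section Rooted

variable (E : Finset (X × Y)) (r : X)

noncomputable def bfsKey (v : X ⊕ Y) : ℕ ×ₗ ℕ :=
  toLex ((biGraph E).dist v (Sum.inl r), Fintype.equivFin (X ⊕ Y) v)

open Classical in
noncomputable def parent (v : X ⊕ Y) : X ⊕ Y :=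
  if h : ∃ u, (biGraph E).Adj v u ∧ (biGraph E).dist u (Sum.inl r) < (biGraph E).dist v (Sum.inl r)
  then h.choose else v

variable {E r}

omit [DecidableEq X] [DecidableEq Y] in
theorem bfsKey_injective : Function.Injective (bfsKey E r) := fun _ _ h =>
  (Fintype.equivFin _).injective (Fin.ext (Prod.ext_iff.mp (toLex.injective h)).2)

theorem adj_parent_and_dist_lt (hconn : (biGraph E).Connected) {v : X ⊕ Y} (hv : v ≠ Sum.inl r) :
    (biGraph E).Adj v (parent E r v) ∧
      (biGraph E).dist (parent E r v) (Sum.inl r) < (biGraph E).dist v (Sum.inl r) := by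
  have h := hconn.exists_adj_dist_lt hv
  rw [parent, dif_pos h]
  exact h.choose_spec

theorem adj_parent (hconn : (biGraph E).Connected) {v : X ⊕ Y} (hv : v ≠ Sum.inl r) :
    (biGraph E).Adj v (parent E r v) :=
  (adj_parent_and_dist_lt hconn hv).1

theorem bfsKey_parent_lt (hconn : (biGraph E).Connected) {v : X ⊕ Y} (hv : v ≠ Sum.inl r) :
    bfsKey E r (parent E r v) < bfsKey E r v :=
  Prod.Lex.toLex_lt_toLex.mpr (Or.inl (adj_parent_and_dist_lt hconn hv).2)

end Rooted

section Canonical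

variable (E : Finset (X × Y)) (r : X) (fX : X ≃ Fin (Fintype.card X))
  (fY : Y ≃ Fin (Fintype.card Y))

-- The order `0 < 1 < 2` is chosen so that two children of a common parent that the canonical
-- order ranks oppositely to the drawing always give a crossing, unless both are leaves.
noncomputable def branchType (v : X ⊕ Y) : Fin 3 :=
  if ∃ u, (biGraph E).Adj v u ∧ layerPos fX fY (parent E r v) < layerPos fX fY u then 2
  else if ∃ u, (biGraph E).Adj v u ∧ layerPos fX fY u < layerPos fX fY (parent E r v) then 0
  else 1

noncomputable def canonKey (v : X ⊕ Y) : Bool ×ₗ ℕ ×ₗ Fin 3 ×ₗ ℕ :=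
  toLex (decide (v ≠ Sum.inl r), toLex (layerPos fX fY (parent E r v),
    toLex (branchType E r fX fY v, (Fintype.equivFin (X ⊕ Y) v : ℕ))))

noncomputable def rankDefect (v : X ⊕ Y) : ℤ :=
  (rankAmong (bfsKey E r) Sum.isLeft (layerPos fX fY) v : ℤ) -
    rankAmong (bfsKey E r) Sum.isLeft (canonKey E r fX fY) v

variable {E r fX fY}

theorem exists_adj_lt_of_branchType_eq_zero {v : X ⊕ Y} (h : branchType E r fX fY v = 0) :
    ∃ u, (biGraph E).Adj v u ∧ layerPos fX fY u < layerPos fX fY (parent E r v) := by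
  unfold branchType at h
  split_ifs at h with h2 h0 <;> first | exact absurd h (by decide) | assumption

theorem exists_adj_gt_of_branchType_eq_two {v : X ⊕ Y} (h : branchType E r fX fY v = 2) :
    ∃ u, (biGraph E).Adj v u ∧ layerPos fX fY (parent E r v) < layerPos fX fY u := by
  unfold branchType at h
  split_ifs at h with h2 h0 <;> first | exact absurd h (by decide) | assumption

theorem isLeaf_of_branchType_eq_one (hconn : (biGraph E).Connected) {v : X ⊕ Y}
    (hv : v ≠ Sum.inl r) (h : branchType E r fX fY v = 1) : IsLeaf E v := by
  unfold branchType at h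
  split_ifs at h with h2 h0 <;> try exact absurd h (by decide)
  simp only [not_exists, not_and, not_lt] at h2 h0
  rw [IsLeaf, SimpleGraph.degree_eq_one_iff_existsUnique_adj]
  refine ⟨parent E r v, adj_parent hconn hv, fun u hu => layerPos_inj
    (isLeft_eq_of_adj rfl hu (adj_parent hconn hv)) (le_antisymm (h2 u hu) (h0 u hu))⟩

theorem canonKey_injective : Function.Injective (canonKey E r fX fY) := fun _ _ h =>
  (Fintype.equivFin _).injective (Fin.ext (Prod.ext_iff.mp (toLex.injective
    (Prod.ext_iff.mp (toLex.injective (Prod.ext_iff.mp (toLex.injective h)).2)).2)).2)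

theorem canonKey_lt_canonKey_iff {a b : X ⊕ Y} (ha : a ≠ Sum.inl r) (hb : b ≠ Sum.inl r) :
    canonKey E r fX fY a < canonKey E r fX fY b ↔
      layerPos fX fY (parent E r a) < layerPos fX fY (parent E r b) ∨
        layerPos fX fY (parent E r a) = layerPos fX fY (parent E r b) ∧
          (branchType E r fX fY a < branchType E r fX fY b ∨
            branchType E r fX fY a = branchType E r fX fY b ∧
              Fintype.equivFin (X ⊕ Y) a < Fintype.equivFin (X ⊕ Y) b) := by
  simp [canonKey, Prod.Lex.toLex_lt_toLex, ha, hb]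

theorem mem_crossedPairs_of_mem_discordantPairs (hconn : (biGraph E).Connected)
    (hns : NoSiblingPairs E) (hroot : (fX r : ℕ) = 0) {p : (X ⊕ Y) × (X ⊕ Y)}
    (hp : p ∈ discordantPairs Sum.isLeft (layerPos fX fY) (canonKey E r fX fY)) :
    p ∈ crossedPairs E fX fY := by
  obtain ⟨a, b⟩ := p
  simp only [discordantPairs, mem_filter, mem_univ, true_and] at hp
  obtain ⟨hs, hkey, hpos⟩ := hp
  have ha : a ≠ Sum.inl r := by
    rintro rfl
    simp [layerPos, hroot] at hpos
  have hb : b ≠ Sum.inl r := by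
    rintro rfl
    simp [canonKey, Prod.Lex.toLex_lt_toLex, ha] at hkey
    exact absurd hkey (by decide)
  simp only [crossedPairs, mem_filter, mem_univ, true_and]
  refine ⟨hs, hpos, ?_⟩
  rcases (canonKey_lt_canonKey_iff ha hb).mp hkey with hlt | ⟨heq, htype⟩
  · exact ⟨_, _, adj_parent hconn ha, adj_parent hconn hb, hlt⟩
  have hle : branchType E r fX fY a ≤ branchType E r fX fY b := by
    rcases htype with h | ⟨h, -⟩
    exacts [h.le, h.le]
  by_cases h0 : branchType E r fX fY a = 0
  · obtain ⟨u, hu, hlt⟩ := exists_adj_lt_of_branchType_eq_zero h0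
    exact ⟨u, _, hu, adj_parent hconn hb, heq ▸ hlt⟩
  by_cases h2 : branchType E r fX fY b = 2
  · obtain ⟨w, hw, hlt⟩ := exists_adj_gt_of_branchType_eq_two h2
    exact ⟨_, w, adj_parent hconn ha, hw, heq ▸ hlt⟩
  -- both are leaves hanging from the same parent
  exfalso
  have ha1 : branchType E r fX fY a = 1 := by omega
  have hb1 : branchType E r fX fY b = 1 := by omega
  have hpar : parent E r a = parent E r b :=
    layerPos_inj (isLeft_eq_of_adj hs (adj_parent hconn ha) (adj_parent hconn hb)) heq
  refine hns a b (fun h => (h ▸ hpos).false) (isLeaf_of_branchType_eq_one hconn ha ha1)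
    (isLeaf_of_branchType_eq_one hconn hb hb1) (parent E r a)
    ⟨adj_parent hconn ha, hpar ▸ adj_parent hconn hb⟩

theorem sum_natAbs_rankDefect_le (hconn : (biGraph E).Connected) (hns : NoSiblingPairs E)
    (hroot : (fX r : ℕ) = 0) :
    ∑ v, (rankDefect E r fX fY v).natAbs ≤ 2 * crossNum E fX fY :=
  calc ∑ v, (rankDefect E r fX fY v).natAbs
      ≤ #(discordantPairs Sum.isLeft (layerPos fX fY) (canonKey E r fX fY)) :=
        sum_natAbs_rankAmong_sub_le (fun _ _ => layerPos_inj) fun _ _ _ h => canonKey_injective h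
    _ ≤ #(crossedPairs E fX fY) :=
        card_le_card fun _ hp => mem_crossedPairs_of_mem_discordantPairs hconn hns hroot hp
    _ ≤ 2 * crossNum E fX fY := card_crossedPairs_le E

theorem sum_zigzag_rankDefect_le (hconn : (biGraph E).Connected) (hns : NoSiblingPairs E)
    (hroot : (fX r : ℕ) = 0) :
    ∑ v : {v // (peersBefore (bfsKey E r) Sum.isLeft v).Nonempty},
      zigzag (rankDefect E r fX fY v) ≤ 4 * crossNum E fX fY :=
  calc ∑ v : {v // (peersBefore (bfsKey E r) Sum.isLeft v).Nonempty},
        zigzag (rankDefect E r fX fY v)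
      ≤ ∑ v, 2 * (rankDefect E r fX fY v).natAbs := by
        rw [← Fintype.sum_subtype_add_sum_subtype
          (fun v => (peersBefore (bfsKey E r) Sum.isLeft v).Nonempty)]
        exact (sum_le_sum fun v _ => zigzag_le _).trans (Nat.le_add_right _ _)
    _ ≤ 4 * crossNum E fX fY := by
        rw [← mul_sum]
        have := sum_natAbs_rankDefect_le (fY := fY) hconn hns hroot
        omega

end Canonical

section Decoding

variable {E : Finset (X × Y)} {r : X} {fX gX : X ≃ Fin (Fintype.card X)}
  {fY gY : Y ≃ Fin (Fintype.card Y)}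

theorem canonKey_lt_iff_canonKey_lt (hconn : (biGraph E).Connected)
    (hT : ∀ v, v ≠ Sum.inl r → branchType E r fX fY v = branchType E r gX gY v)
    {w v : X ⊕ Y} (hwv : w ≠ v) (hs : w.isLeft = v.isLeft)
    (hpar : w ≠ Sum.inl r → v ≠ Sum.inl r →
      (layerPos fX fY (parent E r w) < layerPos fX fY (parent E r v) ↔
        layerPos gX gY (parent E r w) < layerPos gX gY (parent E r v))) :
    canonKey E r fX fY w < canonKey E r fX fY v ↔ canonKey E r gX gY w < canonKey E r gX gY v := by
  by_cases hw : w = Sum.inl r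
  · subst hw
    simp [canonKey, Prod.Lex.toLex_lt_toLex, hwv.symm]
  by_cases hv : v = Sum.inl r
  · subst hv
    simp [canonKey, Prod.Lex.toLex_lt_toLex, hwv]
  have hsp : (parent E r w).isLeft = (parent E r v).isLeft :=
    isLeft_eq_of_adj hs (adj_parent hconn hw) (adj_parent hconn hv)
  rw [canonKey_lt_canonKey_iff hw hv, canonKey_lt_canonKey_iff hw hv, hT w hw, hT v hv,
    hpar hw hv, layerPos_eq_iff hsp, layerPos_eq_iff hsp]

theorem layerPos_lt_iff_of_branchType_eq_of_rankDefect_eq (hconn : (biGraph E).Connected)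
    (hT : ∀ v, v ≠ Sum.inl r → branchType E r fX fY v = branchType E r gX gY v)
    (hD : ∀ v, (peersBefore (bfsKey E r) Sum.isLeft v).Nonempty →
      rankDefect E r fX fY v = rankDefect E r gX gY v)
    {a b : X ⊕ Y} (hab : a.isLeft = b.isLeft) :
    layerPos fX fY a < layerPos fX fY b ↔ layerPos gX gY a < layerPos gX gY b := by
  refine lt_iff_lt_of_forall_rankAmong_eq (s := Sum.isLeft) (P := layerPos fX fY)
    (Q := layerPos gX gY)
    (bfsKey_injective (E := E) (r := r)) (fun _ _ => layerPos_inj)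
    (fun _ _ => layerPos_inj) (fun v earlier => ?_) hab
  rcases (peersBefore (bfsKey E r) Sum.isLeft v).eq_empty_or_nonempty with hempty | hne
  · simp [rankAmong, hempty]
  have hcanon : rankAmong (bfsKey E r) Sum.isLeft (canonKey E r fX fY) v =
      rankAmong (bfsKey E r) Sum.isLeft (canonKey E r gX gY) v :=
    congrArg card <| filter_congr fun w hw => by
      obtain ⟨hs, hκ⟩ := mem_peersBefore.mp hw
      refine canonKey_lt_iff_canonKey_lt hconn hT (fun h => (h ▸ hκ).false) hs fun hw' hv' =>
        earlier _ _ ((bfsKey_parent_lt hconn hw').trans hκ) (bfsKey_parent_lt hconn hv')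
          (isLeft_eq_of_adj hs (adj_parent hconn hw') (adj_parent hconn hv'))
  have hdefect := hD v hne
  unfold rankDefect at hdefect
  omega

end Decoding

section Counting

variable {E : Finset (X × Y)} {r : X}

noncomputable def layoutCode (E : Finset (X × Y)) (r : X)
    (d : (X ≃ Fin (Fintype.card X)) × (Y ≃ Fin (Fintype.card Y))) :
    ({v : X ⊕ Y // v ≠ Sum.inl r} → Fin 3) ×
      ({v // (peersBefore (bfsKey E r) Sum.isLeft v).Nonempty} → ℕ) :=
  (fun v => branchType E r d.1 d.2 v, fun v => zigzag (rankDefect E r d.1 d.2 v))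

theorem eq_of_layoutCode_eq (hconn : (biGraph E).Connected)
    {d d' : (X ≃ Fin (Fintype.card X)) × (Y ≃ Fin (Fintype.card Y))}
    (h : layoutCode E r d = layoutCode E r d') : d.1 = d'.1 :=
  Equiv.eq_of_lt_iff_lt fun x x' =>
    layerPos_lt_iff_of_branchType_eq_of_rankDefect_eq hconn
      (fun v hv => congrFun (congrArg Prod.fst h) ⟨v, hv⟩)
      (fun v hv => zigzag_injective (congrFun (congrArg Prod.snd h) ⟨v, hv⟩))
      (a := Sum.inl x) (b := Sum.inl x') rfl

theorem card_image_layoutCode_le [Nonempty Y] (hconn : (biGraph E).Connected)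
    (hns : NoSiblingPairs E) {k : ℕ}
    (D : Finset ((X ≃ Fin (Fintype.card X)) × (Y ≃ Fin (Fintype.card Y))))
    (hD : ∀ d ∈ D, (d.1 r : ℕ) = 0 ∧ crossNum E d.1 d.2 ≤ k) :
    #(D.image (layoutCode E r)) ≤
      3 ^ (Fintype.card (X ⊕ Y) - 1) * 2 ^ (Fintype.card (X ⊕ Y) - 2 + 4 * k) := by
  obtain ⟨y⟩ := ‹Nonempty Y›
  have hsum : ∀ c ∈ D.image fun d => (layoutCode E r d).2, ∑ v, c v ≤ 4 * k := by
    simp only [mem_image]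
    rintro _ ⟨d, hd, rfl⟩
    exact (sum_zigzag_rankDefect_le hconn hns (hD d hd).1).trans
      (Nat.mul_le_mul_left 4 (hD d hd).2)
  have hcard : Fintype.card {v // (peersBefore (bfsKey E r) Sum.isLeft v).Nonempty} ≤
      Fintype.card (X ⊕ Y) - 2 :=
    card_peersBefore_nonempty_le (a := Sum.inl r) (b := Sum.inr y) (by simp)
  calc #(D.image (layoutCode E r))
      ≤ #((univ : Finset ({v : X ⊕ Y // v ≠ Sum.inl r} → Fin 3)) ×ˢ
          D.image fun d => (layoutCode E r d).2) :=
        card_le_card <| image_subset_iff.mpr fun d hd =>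
          mem_product.mpr ⟨mem_univ _, mem_image_of_mem _ hd⟩
    _ = 3 ^ (Fintype.card (X ⊕ Y) - 1) * #(D.image fun d => (layoutCode E r d).2) := by
        rw [card_product, card_univ, Fintype.card_fun, Fintype.card_fin,
          Fintype.card_subtype_compl, Fintype.card_subtype_eq]
    _ ≤ 3 ^ (Fintype.card (X ⊕ Y) - 1) * 2 ^ (Fintype.card (X ⊕ Y) - 2 + 4 * k) :=
        Nat.mul_le_mul_left _ <| (card_le_two_pow_of_sum_le _ hsum).trans <|
          Nat.pow_le_pow_right two_pos (by omega)

theorem card_rooted_layouts_le [Nonempty Y] (hconn : (biGraph E).Connected)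
    (hns : NoSiblingPairs E) (r : X) (k : ℕ) :
    #{fX : X ≃ Fin (Fintype.card X) | (fX r : ℕ) = 0 ∧ ∃ fY, crossNum E fX fY ≤ k} ≤
      3 ^ (Fintype.card (X ⊕ Y) - 1) * 2 ^ (Fintype.card (X ⊕ Y) - 2 + 4 * k) := by
  set D : Finset ((X ≃ Fin (Fintype.card X)) × (Y ≃ Fin (Fintype.card Y))) :=
    {d | (d.1 r : ℕ) = 0 ∧ crossNum E d.1 d.2 ≤ k}
  refine (card_le_card_of_forall_subsingleton
    (fun fX c => ∃ fY, (fX, fY) ∈ D ∧ layoutCode E r (fX, fY) = c) ?_ ?_).trans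
    (card_image_layoutCode_le hconn hns D fun d hd => (mem_filter.mp hd).2)
  · intro fX hfX
    obtain ⟨hroot, fY, hk⟩ := (mem_filter.mp hfX).2
    have hd : (fX, fY) ∈ D := mem_filter.mpr ⟨mem_univ _, hroot, hk⟩
    exact ⟨_, mem_image_of_mem _ hd, fY, hd, rfl⟩
  · rintro c - fX ⟨-, fY, -, rfl⟩ fX' ⟨-, fY', -, h⟩
    exact (eq_of_layoutCode_eq hconn h).symm

end Counting

end TwoLayer

/-- If `G` is connected, has no sibling pairs, and `|X|, |Y| ≥ 2`, then the number of
layouts `f_X` on `X` extendable to a two-layer drawing with at most `k` crossings is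
at most `n * 2 ^ (4k + 3n - 4)`, where `n = |X| + |Y|`. -/
theorem num_layouts_upper_bound (X Y : Type) [Fintype X] [Fintype Y]
    [DecidableEq X] [DecidableEq Y] (E : Finset (X × Y)) (k : ℕ)
    (hconn : (biGraph E).Connected) (hns : NoSiblingPairs E)
    (hX : 2 ≤ Fintype.card X) (hY : 2 ≤ Fintype.card Y) :
    Fintype.card {fX : X ≃ Fin (Fintype.card X) //
        ∃ fY : Y ≃ Fin (Fintype.card Y), crossNum E fX fY ≤ k}
      ≤ (Fintype.card X + Fintype.card Y) *
        2 ^ (4 * k + 3 * (Fintype.card X + Fintype.card Y) - 4) := by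
  have : Nonempty Y := Fintype.card_pos_iff.mp (by omega)
  set n := Fintype.card X + Fintype.card Y
  have hn : Fintype.card (X ⊕ Y) = n := Fintype.card_sum
  have hpow : 3 ^ (n - 1) * 2 ^ (n - 2 + 4 * k) ≤ 2 ^ (4 * k + 3 * n - 4) :=
    calc 3 ^ (n - 1) * 2 ^ (n - 2 + 4 * k) ≤ (2 ^ 2) ^ (n - 1) * 2 ^ (n - 2 + 4 * k) :=
          Nat.mul_le_mul_right _ (Nat.pow_le_pow_left (by norm_num) _)
      _ = 2 ^ (4 * k + 3 * n - 4) := by rw [← pow_mul, ← pow_add]; congr 1; omega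
  calc Fintype.card {fX : X ≃ Fin (Fintype.card X) // ∃ fY, crossNum E fX fY ≤ k}
      ≤ #(univ.biUnion fun r : X =>
          {fX : X ≃ Fin (Fintype.card X) | (fX r : ℕ) = 0 ∧ ∃ fY, crossNum E fX fY ≤ k}) := by
        rw [Fintype.card_subtype]
        refine card_le_card fun fX hfX => mem_biUnion.mpr ⟨fX.symm ⟨0, by omega⟩, mem_univ _, ?_⟩
        simpa using hfX
    _ ≤ ∑ r : X, 3 ^ (n - 1) * 2 ^ (n - 2 + 4 * k) :=
        card_biUnion_le.trans <|
          sum_le_sum fun r _ => hn ▸ TwoLayer.card_rooted_layouts_le hconn hns r k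
    _ ≤ n * 2 ^ (4 * k + 3 * n - 4) := by
        rw [sum_const, card_univ, smul_eq_mul]
        exact Nat.mul_le_mul (by omega) hpow
end

section
/- Let G be a connected bipartite graph with bipartition (X, Y), edge set E ⊆ X × Y, and |X| ≥ 2, and let r ∈ X. Then there exist a function T : X \ {r} → X and, for each x ∈ X \ {r}, a vertex y_x ∈ Y such that: (1) for each x ∈ X \ {r}, both (x, y_x) ∈ E and (T(x), y_x) ∈ E (so x and T(x) are joined by a path P_x of length two through y_x); (2) each edge e ∈ E satisfies |{x ∈ X \ {r} : e ∈ {(x, y_x), (T(x), y_x)}}| ≤ 2, i.e., each edge lies on at most two of the paths P_x; and (3) the graph with vertex set X and edge set {{x, T(x)} : x ∈ X \ {r}} is a tree. -/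
open Finset

variable {X Y : Type} [Fintype X] [Fintype Y] [DecidableEq X] [DecidableEq Y]

/-!
Take a breadth-first search tree of `biGraph E` rooted at `r`: every `y ∈ Y` has a parent
`g y ∈ X` one level closer to `r`, and every `x ≠ r` a parent `p x ∈ Y`. List the children of
`y` as `x₁ < ⋯ < x_k` (for an arbitrary ranking of `X`) and chain them through `y`:
`T x₁ = g y` and `T xᵢ₊₁ = xᵢ`, with `y_x = p x`. The edge `(x, p x)` then lies only on `P_x`
and on the path of the next sibling of `x`, because a parent of `y` is never a child of `y`, so
`x ↦ (T x, p x)` is injective. Moreover `T` strictly decreases (depth, rank) lexicographically;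
hence the `|X| - 1` edges `{x, T x}` connect `X` to `r` and form a tree.
-/

open Function SimpleGraph

namespace SimpleGraph

variable {V : Type*} {G : SimpleGraph V}

theorem Connected.exists_adj_dist_add_one_eq (hG : G.Connected) {r v : V} (hv : v ≠ r) :
    ∃ w, G.Adj v w ∧ G.dist r w + 1 = G.dist r v := by
  obtain ⟨p, hp⟩ := (hG r v).exists_walk_length_eq_dist
  obtain ⟨w, hadj, q, hq⟩ := Walk.exists_eq_cons_of_ne hv p.reverse
  have hlen : p.length = q.length + 1 := by simpa using congrArg Walk.length hq
  have hw : G.dist r w ≤ q.length := by simpa using dist_le q.reverse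
  have hv' : G.dist r v ≤ G.dist r w + 1 := by
    simpa [dist_eq_one_iff_adj.mpr hadj.symm] using hG.dist_triangle (u := r) (v := w) (w := v)
  exact ⟨w, hadj, by omega⟩

def parentGraph {r : V} (T : {x // x ≠ r} → V) : SimpleGraph V :=
  fromRel fun a b => ∃ x : {x // x ≠ r}, a = x.1 ∧ b = T x

variable {α : Type*} [Preorder α] {r : V} {T : {x // x ≠ r} → V} {μ : V → α}

theorem parentGraph_adj_parent (hμ : ∀ x, μ (T x) < μ x) (x : {x // x ≠ r}) :
    (parentGraph T).Adj x (T x) := by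
  rw [parentGraph, fromRel_adj]
  exact ⟨fun h => (hμ x).ne' (congrArg μ h), .inl ⟨x, rfl, rfl⟩⟩

theorem parentGraph_connected [WellFoundedLT α] (hμ : ∀ x, μ (T x) < μ x) :
    (parentGraph T).Connected := by
  have hreach (a : V) : (parentGraph T).Reachable a r := by
    induction a using (InvImage.wf μ wellFounded_lt).induction with
    | _ a ih =>
      obtain rfl | ha := eq_or_ne a r
      · rfl
      · exact (parentGraph_adj_parent hμ ⟨a, ha⟩).reachable.trans (ih _ (hμ ⟨a, ha⟩))
  exact (connected_iff _).2 ⟨fun a b => (hreach a).trans (hreach b).symm, ⟨r⟩⟩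

theorem card_edgeSet_parentGraph (hμ : ∀ x, μ (T x) < μ x) :
    Nat.card (parentGraph T).edgeSet = Nat.card {x // x ≠ r} := by
  refine (Nat.card_congr (Equiv.ofBijective
    (fun x => ⟨s(x.1, T x), parentGraph_adj_parent hμ x⟩) ⟨?_, ?_⟩)).symm
  · intro x x' h
    rcases Sym2.eq_iff.1 (congrArg Subtype.val h) with ⟨h, -⟩ | ⟨h₁, h₂⟩
    · exact Subtype.ext h
    · exact absurd ((hμ x).trans (h₁ ▸ h₂ ▸ hμ x')) (lt_irrefl _)
  · rintro ⟨e, he⟩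
    induction e using Sym2.ind with
    | _ a b =>
      rw [mem_edgeSet, parentGraph, fromRel_adj] at he
      obtain ⟨-, ⟨x, ha, hb⟩ | ⟨x, hb, ha⟩⟩ := he <;> subst ha hb
      · exact ⟨x, rfl⟩
      · exact ⟨x, Subtype.ext Sym2.eq_swap⟩

theorem isTree_parentGraph [Finite V] [WellFoundedLT α] (hμ : ∀ x, μ (T x) < μ x) :
    (parentGraph T).IsTree := by
  classical
  refine isTree_iff_connected_and_card.2 ⟨parentGraph_connected hμ, ?_⟩
  rw [card_edgeSet_parentGraph hμ, ← Finite.card_option, Nat.card_congr (Equiv.optionSubtypeNe r)]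

end SimpleGraph

theorem exists_fiberwise_pred {ι β : Type*} [Finite ι] (f : ι → β) {ρ : ι → ℕ}
    (hρ : Injective ρ) :
    ∃ pred : ι → Option ι, (∀ i j, pred i = some j → f j = f i ∧ ρ j < ρ i) ∧
      Injective fun i => (f i, pred i) := by
  classical
  have := Fintype.ofFinite ι
  let : LinearOrder ι := LinearOrder.lift' ρ hρ
  let below (i : ι) : Finset ι := {j | f j = f i ∧ j < i}
  have mem_below {i j} : j ∈ below i ↔ f j = f i ∧ j < i := by simp [below]
  refine ⟨fun i => (below i).max, fun i j h => mem_below.1 (Finset.mem_of_max h), ?_⟩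
  intro i i' h
  obtain ⟨hf, hmax⟩ := Prod.ext_iff.1 h
  dsimp only at hf hmax
  clear h
  by_contra hne
  wlog hlt : i < i' generalizing i i'
  · exact this hf.symm hmax.symm (Ne.symm hne) (lt_of_le_of_ne (not_lt.1 hlt) (Ne.symm hne))
  have hi : i ∈ below i' := mem_below.2 ⟨hf, hlt⟩
  cases hb : (below i).max with
  | bot => simp [Finset.max_eq_bot.1 (hmax.symm.trans hb)] at hi
  | coe j =>
    exact Finset.notMem_of_max_lt (mem_below.1 (Finset.mem_of_max hb)).2 (hmax.symm.trans hb) hi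

theorem Finset.card_filter_eq_or_eq_le_two {ι α : Type*} [Fintype ι] [DecidableEq α]
    {f g : ι → α} (hf : Injective f) (hg : Injective g) (a : α) :
    (univ.filter fun i => a = f i ∨ a = g i).card ≤ 2 := by
  classical
  have fiber_le_one {f : ι → α} (hf : Injective f) : (univ.filter fun i => a = f i).card ≤ 1 :=
    card_le_one.2 fun i hi j hj => hf ((mem_filter.1 hi).2.symm.trans (mem_filter.1 hj).2)
  rw [filter_or]
  exact (card_union_le _ _).trans (add_le_add (fiber_le_one hf) (fiber_le_one hg))

theorem exists_sibling_chain {X Y : Type*} [Finite X] (E : Set (X × Y)) {r : X}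
    (δ : X ⊕ Y → ℕ) (g : Y → X) (hgE : ∀ y, (g y, y) ∈ E)
    (hgδ : ∀ y, δ (.inl (g y)) + 1 = δ (.inr y)) (p : {x // x ≠ r} → Y)
    (hpE : ∀ x, (x.1, p x) ∈ E) (hpδ : ∀ x, δ (.inr (p x)) + 1 = δ (.inl x.1))
    {ρ : X → ℕ} (hρ : Injective ρ) :
    ∃ T : {x // x ≠ r} → X, (∀ x, (T x, p x) ∈ E) ∧ Injective (fun x => (T x, p x)) ∧
      ∀ x, toLex (δ (.inl (T x)), ρ (T x)) < toLex (δ (.inl x.1), ρ x) := by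
  obtain ⟨pred, hpred, hinj⟩ := exists_fiberwise_pred p (hρ.comp Subtype.val_injective)
  have child_ne_parent (x j : {x // x ≠ r}) (hj : p j = p x) : j.1 ≠ g (p x) := by
    intro h
    have hj₁ := hpδ j
    have hg₁ := hgδ (p x)
    rw [hj, h] at hj₁
    omega
  refine ⟨fun x => (pred x).elim (g (p x)) Subtype.val, fun x => ?_, ?_, fun x => ?_⟩
  · cases h : pred x with
    | none => simpa [h] using hgE (p x)
    | some j => simpa [h, (hpred x j h).1] using hpE j
  · intro x x' hxx'
    obtain ⟨hT, hp⟩ := Prod.ext_iff.1 hxx'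
    dsimp only at hT hp
    refine hinj (Prod.ext hp ?_)
    cases h : pred x <;> cases h' : pred x' <;> simp only [h, h', Option.elim] at hT ⊢
    · exact child_ne_parent x' _ (hpred x' _ h').1 (hT.symm.trans (congrArg g hp)) |>.elim
    · exact child_ne_parent x _ (hpred x _ h).1 (hT.trans (congrArg g hp.symm)) |>.elim
    · exact congrArg some (Subtype.ext hT)
  · rw [Prod.Lex.toLex_lt_toLex]
    cases h : pred x with
    | none =>
      left
      simp only [h, Option.elim]
      have := hgδ (p x)
      have := hpδ x
      omega
    | some j =>
      obtain ⟨hj, hρj⟩ := hpred x j h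
      right
      simp only [h, Option.elim]
      exact ⟨by rw [← hpδ j, ← hpδ x, hj], hρj⟩

theorem exists_bfs_parent_of_inr {X Y : Type} {E : Finset (X × Y)}
    (hconn : (biGraph E).Connected) (r : X) (y : Y) :
    ∃ x, (x, y) ∈ E ∧
      (biGraph E).dist (.inl r) (.inl x) + 1 = (biGraph E).dist (.inl r) (.inr y) := by
  obtain ⟨x | y', hadj, hd⟩ := hconn.exists_adj_dist_add_one_eq (v := .inr y) Sum.inr_ne_inl
  · exact ⟨x, hadj, hd⟩
  · exact hadj.elim

theorem exists_bfs_parent_of_inl {X Y : Type} {E : Finset (X × Y)}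
    (hconn : (biGraph E).Connected) {r x : X} (hx : x ≠ r) :
    ∃ y, (x, y) ∈ E ∧
      (biGraph E).dist (.inl r) (.inr y) + 1 = (biGraph E).dist (.inl r) (.inl x) := by
  obtain ⟨x' | y, hadj, hd⟩ := hconn.exists_adj_dist_add_one_eq (Sum.inl_injective.ne hx)
  · exact hadj.elim
  · exact ⟨y, hadj, hd⟩

theorem eulerian_tree_structure_general (X Y : Type) [Fintype X]
    [DecidableEq X] [DecidableEq Y] (E : Finset (X × Y))
    (hconn : (biGraph E).Connected) (r : X) :
    ∃ (T : {x : X // x ≠ r} → X) (yp : {x : X // x ≠ r} → Y),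
      (∀ x : {x : X // x ≠ r}, (x.1, yp x) ∈ E ∧ (T x, yp x) ∈ E ∧ x.1 ≠ T x) ∧
      (∀ e ∈ E,
        (Finset.univ.filter fun x : {x : X // x ≠ r} =>
          e = (x.1, yp x) ∨ e = (T x, yp x)).card ≤ 2) ∧
      (SimpleGraph.fromRel fun a b =>
        ∃ x : {x : X // x ≠ r}, a = x.1 ∧ b = T x).IsTree := by
  choose g hgE hgδ using exists_bfs_parent_of_inr hconn r
  choose p hpE hpδ using fun x : {x // x ≠ r} => exists_bfs_parent_of_inl hconn x.2
  obtain ⟨ρ, hρ⟩ := exists_injective_nat X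
  obtain ⟨T, hTE, hTinj, hμ⟩ := exists_sibling_chain (E := E) _ g hgE hgδ p hpE hpδ hρ
  let μ : X → ℕ ×ₗ ℕ := fun a => toLex ((biGraph E).dist (.inl r) (.inl a), ρ a)
  have hval : Injective fun x : {x // x ≠ r} => (x.1, p x) :=
    fun x x' h => Subtype.ext (congrArg Prod.fst h)
  exact ⟨T, p, fun x => ⟨hpE x, hTE x, (parentGraph_adj_parent (μ := μ) hμ x).ne⟩,
    fun e _ => Finset.card_filter_eq_or_eq_le_two hval hTinj e, isTree_parentGraph (μ := μ) hμ⟩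

/-- In a connected bipartite graph with `|X| ≥ 2` and any root `r ∈ X`, there exist
`T : X \ {r} → X` and midpoints `y_x ∈ Y` such that each `x` is joined to `T x` by a
path `P_x` of length two through `y_x`, each edge lies on at most two of the paths
`P_x`, and the graph on `X` with edges `{x, T x}` is a tree. -/
theorem eulerian_tree_structure (X Y : Type) [Fintype X] [Fintype Y]
    [DecidableEq X] [DecidableEq Y] (E : Finset (X × Y))
    (hconn : (biGraph E).Connected) (hX : 2 ≤ Fintype.card X) (r : X) :
    ∃ (T : {x : X // x ≠ r} → X) (yp : {x : X // x ≠ r} → Y),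
      (∀ x : {x : X // x ≠ r}, (x.1, yp x) ∈ E ∧ (T x, yp x) ∈ E ∧ x.1 ≠ T x) ∧
      (∀ e ∈ E,
        (Finset.univ.filter fun x : {x : X // x ≠ r} =>
          e = (x.1, yp x) ∨ e = (T x, yp x)).card ≤ 2) ∧
      (SimpleGraph.fromRel fun a b =>
        ∃ x : {x : X // x ≠ r}, a = x.1 ∧ b = T x).IsTree :=
  eulerian_tree_structure_general X Y E hconn r
end

section
/- For every bipartite graph G with bipartition (X, Y), there exists a two-layer drawing D of G whose crossing number equals the bipartite crossing number bcr(G) and in which, for every non-leaf vertex v, all the leaves adjacent to v occupy consecutive positions in their layer (i.e., the images under the layout of the leaves adjacent to v form a set of consecutive integers). -/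
open Finset

variable {X Y : Type} [Fintype X] [Fintype Y] [DecidableEq X] [DecidableEq Y]

/-- A set of naturals is a set of consecutive integers. -/
def IsConsecutive (s : Set ℕ) : Prop :=
  ∀ a b c : ℕ, a ∈ s → c ∈ s → a ≤ b → b ≤ c → b ∈ s

/-!
Fix the order of one layer. The leaves hanging from a vertex `v` never cross one another, and
the number of crossings on the edge of such a leaf depends only on where the leaf sits relative
to the vertices of its layer that are not leaves of `v`. Moving all leaves of `v` right next to
the cheapest one therefore does not increase the crossing number, makes them consecutive, and
keeps consecutive every group of vertices that was consecutive and is disjoint from them.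
Doing this for every vertex of one layer and then of the other turns an optimal drawing into
one with the required property.
-/

section Crossings

variable {V W α β γ : Type*} [LinearOrder α] [LinearOrder β] [LinearOrder γ]

def crossings (p : V → α) (q : W → β) (E : Finset (V × W)) : ℕ :=
  #{ee ∈ E ×ˢ E | p ee.1.1 < p ee.2.1 ∧ q ee.2.2 < q ee.1.2}

theorem crossings_eq_sum (p : V → α) (q : W → β) (E : Finset (V × W)) :
    crossings p q E =
      ∑ e ∈ E, ∑ e' ∈ E, if p e.1 < p e'.1 ∧ q e'.2 < q e.2 then 1 else 0 := by
  rw [crossings, card_filter, sum_product]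

theorem crossings_congr (p : V → α) {q : W → β} {q' : W → γ} {E : Finset (V × W)}
    (h : ∀ e ∈ E, ∀ e' ∈ E, q e'.2 < q e.2 ↔ q' e'.2 < q' e.2) :
    crossings p q E = crossings p q' E := by
  unfold crossings
  congr 1
  refine filter_congr fun ee hee => ?_
  rw [mem_product] at hee
  rw [h _ hee.1 _ hee.2]

theorem crossings_image_swap [DecidableEq V] [DecidableEq W] (p : V → α) (q : W → β)
    (E : Finset (V × W)) : crossings q p (E.image Prod.swap) = crossings p q E := by
  rw [crossings_eq_sum, crossings_eq_sum, sum_comm]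
  simp only [sum_image Prod.swap_injective.injOn, Prod.fst_swap, Prod.snd_swap, and_comm]

/-- The number of edges of `F` crossed by a segment from position `s` to position `t`. -/
def segmentCrossings (p : V → α) (q : W → β) (F : Finset (V × W)) (s : α) (t : β) : ℕ :=
  #{e ∈ F | s < p e.1 ∧ q e.2 < t} + #{e ∈ F | p e.1 < s ∧ t < q e.2}

theorem segmentCrossings_congr (p : V → α) {q : W → β} {q' : W → γ} {F : Finset (V × W)}
    (s : α) {t : β} {t' : γ} (hlt : ∀ e ∈ F, q e.2 < t ↔ q' e.2 < t')
    (hgt : ∀ e ∈ F, t < q e.2 ↔ t' < q' e.2) :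
    segmentCrossings p q F s t = segmentCrossings p q' F s t' := by
  unfold segmentCrossings
  congr 2
  · exact filter_congr fun e he => by rw [hlt e he]
  · exact filter_congr fun e he => by rw [hgt e he]

theorem crossings_eq_add_sum_segmentCrossings [DecidableEq W] (p : V → α) (q : W → β)
    {E : Finset (V × W)} {S : Finset W} {v : V} (hS : ∀ e ∈ E, e.2 ∈ S → e.1 = v) :
    crossings p q E = crossings p q {e ∈ E | e.2 ∉ S} +
      ∑ e ∈ E with e.2 ∈ S, segmentCrossings p q {e ∈ E | e.2 ∉ S} (p v) (q e.2) := by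
  set EL := {e ∈ E | e.2 ∈ S}
  set En := {e ∈ E | e.2 ∉ S}
  have sum_split (f : V × W → ℕ) : ∑ e ∈ E, f e = ∑ e ∈ EL, f e + ∑ e ∈ En, f e :=
    (sum_filter_add_sum_filter_not E _ f).symm
  have hEL : ∀ e ∈ EL, e.1 = v := fun e he => hS e (mem_filter.1 he).1 (mem_filter.1 he).2
  have hLL :
      ∑ e ∈ EL, ∑ e' ∈ EL, (if p e.1 < p e'.1 ∧ q e'.2 < q e.2 then 1 else 0) = 0 :=
    sum_eq_zero fun e he => sum_eq_zero fun e' he' => by simp [hEL e he, hEL e' he']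
  have hLn : ∑ e ∈ EL, ∑ e' ∈ En, (if p e.1 < p e'.1 ∧ q e'.2 < q e.2 then 1 else 0) =
      ∑ e ∈ EL, #{e' ∈ En | p v < p e'.1 ∧ q e'.2 < q e.2} :=
    sum_congr rfl fun e he => by rw [card_filter, hEL e he]
  have hnL : ∑ e ∈ En, ∑ e' ∈ EL, (if p e.1 < p e'.1 ∧ q e'.2 < q e.2 then 1 else 0) =
      ∑ e' ∈ EL, #{e ∈ En | p e.1 < p v ∧ q e'.2 < q e.2} := by
    rw [sum_comm]
    exact sum_congr rfl fun e' he' => by rw [card_filter, hEL e' he']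
  rw [crossings_eq_sum, crossings_eq_sum p q En, sum_split]
  simp only [sum_split, sum_add_distrib, hLL, hLn, hnL, segmentCrossings]
  ring

end Crossings

section Contiguity

variable {W β γ : Type*}

/-- Moves every element of `S` to the position of `w₀`, keeping the relative order inside `S`. -/
def collapse [DecidableEq W] (q : W → β) (S : Finset W) (w₀ : W) (w : W) : β ×ₗ β :=
  toLex (q (if w ∈ S then w₀ else w), q w)

theorem collapse_injective [DecidableEq W] {q : W → β} {S : Finset W} {w₀ : W}
    (hq : q.Injective) : (collapse q S w₀).Injective :=
  fun _ _ h => hq (congrArg Prod.snd (toLex.injective h))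

variable [LinearOrder β] [LinearOrder γ]

def IsContiguous (q : W → β) (S : Finset W) : Prop :=
  ∀ ⦃a b c⦄, a ∈ S → c ∈ S → q a ≤ q b → q b ≤ q c → b ∈ S

theorem IsContiguous.of_le_iff {q : W → β} {q' : W → γ} {S : Finset W} (hS : IsContiguous q S)
    (h : ∀ a b, q' a ≤ q' b ↔ q a ≤ q b) : IsContiguous q' S :=
  fun _ _ _ ha hc hab hbc => hS ha hc ((h _ _).1 hab) ((h _ _).1 hbc)

theorem IsContiguous.isConsecutive {n : ℕ} {f : W ≃ Fin n} {S : Finset W}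
    (hS : IsContiguous f S) : IsConsecutive {m | ∃ w ∈ S, (f w : ℕ) = m} := by
  rintro a b c ⟨u, hu, rfl⟩ ⟨w, hw, rfl⟩ hab hbc
  have hb : b < n := hbc.trans_lt (f w).isLt
  refine ⟨f.symm ⟨b, hb⟩, hS hu hw ?_ ?_, by simp⟩ <;> simpa [Fin.le_def]

theorem exists_layout_le_iff [Fintype W] {q : W → β} (hq : q.Injective) :
    ∃ f : W ≃ Fin (Fintype.card W), ∀ a b, f a ≤ f b ↔ q a ≤ q b := by
  let : LinearOrder W := LinearOrder.lift' q hq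
  exact ⟨(Fintype.orderIsoFinOfCardEq W rfl).symm.toEquiv,
    fun a b => (Fintype.orderIsoFinOfCardEq W rfl).symm.le_iff_le⟩

variable [DecidableEq W] {q : W → β} {S : Finset W} {w₀ : W}

theorem collapse_lt_collapse_of_notMem {a b : W} (ha : a ∉ S) (hb : b ∉ S) :
    collapse q S w₀ a < collapse q S w₀ b ↔ q a < q b := by
  simp +contextual [collapse, Prod.Lex.toLex_lt_toLex, ha, hb]

theorem collapse_lt_collapse_of_mem_of_notMem (hq : q.Injective) (hw₀ : w₀ ∈ S) {a b : W}
    (ha : a ∈ S) (hb : b ∉ S) : collapse q S w₀ a < collapse q S w₀ b ↔ q w₀ < q b := by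
  have : q w₀ ≠ q b := hq.ne (ne_of_mem_of_not_mem hw₀ hb)
  simp [collapse, Prod.Lex.toLex_lt_toLex, ha, hb, this]

theorem collapse_lt_collapse_of_notMem_of_mem (hq : q.Injective) (hw₀ : w₀ ∈ S) {a b : W}
    (ha : a ∉ S) (hb : b ∈ S) : collapse q S w₀ a < collapse q S w₀ b ↔ q a < q w₀ := by
  have : q a ≠ q w₀ := hq.ne (ne_of_mem_of_not_mem hw₀ ha).symm
  simp [collapse, Prod.Lex.toLex_lt_toLex, ha, hb, this]

theorem isContiguous_collapse (hq : q.Injective) (hw₀ : w₀ ∈ S) :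
    IsContiguous (collapse q S w₀) S := by
  intro a b c ha hc hab hbc
  by_contra hb
  rw [← not_lt, collapse_lt_collapse_of_notMem_of_mem hq hw₀ hb ha, not_lt] at hab
  rw [← not_lt, collapse_lt_collapse_of_mem_of_notMem hq hw₀ hc hb, not_lt] at hbc
  exact hb (hq (le_antisymm hbc hab) ▸ hw₀)

theorem IsContiguous.collapse {T : Finset W} (hT : IsContiguous q T) (hq : q.Injective)
    (hw₀ : w₀ ∈ S) (hST : Disjoint S T) : IsContiguous (collapse q S w₀) T := by
  intro a b c ha hc hab hbc
  have ha' := disjoint_right.1 hST ha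
  have hc' := disjoint_right.1 hST hc
  rw [← not_lt] at hab hbc
  by_cases hb : b ∈ S
  · rw [collapse_lt_collapse_of_mem_of_notMem hq hw₀ hb ha', not_lt] at hab
    rw [collapse_lt_collapse_of_notMem_of_mem hq hw₀ hc' hb, not_lt] at hbc
    exact absurd (hT ha hc hab hbc) (disjoint_left.1 hST hw₀)
  · rw [collapse_lt_collapse_of_notMem hb ha', not_lt] at hab
    rw [collapse_lt_collapse_of_notMem hc' hb, not_lt] at hbc
    exact hT ha hc hab hbc

end Contiguity

section Layouts

variable {V W α β : Type*} [LinearOrder α] [LinearOrder β] [DecidableEq W]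

theorem exists_collapse_crossings_le (E : Finset (V × W)) (p : V → α) {q : W → β}
    (hq : q.Injective) {S : Finset W} (hne : S.Nonempty) {v : V}
    (hS : ∀ e ∈ E, e.2 ∈ S → e.1 = v) :
    ∃ w₀ ∈ S, crossings p (collapse q S w₀) E ≤ crossings p q E := by
  set En := {e ∈ E | e.2 ∉ S}
  obtain ⟨w₀, hw₀, hmin⟩ :=
    S.exists_min_image (fun w => segmentCrossings p q En (p v) (q w)) hne
  refine ⟨w₀, hw₀, ?_⟩
  set κ := collapse q S w₀
  have hEn : ∀ e ∈ En, e.2 ∉ S := fun e he => (mem_filter.1 he).2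
  have hseg : ∀ e ∈ {e ∈ E | e.2 ∈ S},
      segmentCrossings p κ En (p v) (κ e.2) = segmentCrossings p q En (p v) (q w₀) :=
    fun e he => have heS := (mem_filter.1 he).2
      segmentCrossings_congr p (p v)
        (fun e' he' => collapse_lt_collapse_of_notMem_of_mem hq hw₀ (hEn e' he') heS)
        (fun e' he' => collapse_lt_collapse_of_mem_of_notMem hq hw₀ heS (hEn e' he'))
  calc crossings p κ E
      = crossings p κ En + ∑ e ∈ E with e.2 ∈ S, segmentCrossings p κ En (p v) (κ e.2) :=
        crossings_eq_add_sum_segmentCrossings p κ hS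
    _ = crossings p q En + ∑ e ∈ E with e.2 ∈ S, segmentCrossings p q En (p v) (q w₀) := by
        rw [crossings_congr p fun e he e' he' =>
          collapse_lt_collapse_of_notMem (hEn e' he') (hEn e he), sum_congr rfl hseg]
    _ ≤ crossings p q En + ∑ e ∈ E with e.2 ∈ S, segmentCrossings p q En (p v) (q e.2) := by
        gcongr with e he
        exact hmin _ (mem_filter.1 he).2
    _ = crossings p q E := (crossings_eq_add_sum_segmentCrossings p q hS).symm

variable [Fintype W]

theorem exists_layout_contiguous_of_pendant (E : Finset (V × W)) (p : V → α) {q : W → β}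
    (hq : q.Injective) {S : Finset W} {v : V} (hS : ∀ e ∈ E, e.2 ∈ S → e.1 = v) :
    ∃ f : W ≃ Fin (Fintype.card W), crossings p f E ≤ crossings p q E ∧ IsContiguous f S ∧
      ∀ T, Disjoint S T → IsContiguous q T → IsContiguous f T := by
  rcases S.eq_empty_or_nonempty with rfl | hne
  · obtain ⟨f, hf⟩ := exists_layout_le_iff hq
    refine ⟨f, ?_, by simp [IsContiguous], fun T _ hT => hT.of_le_iff hf⟩
    exact (crossings_congr p fun e _ e' _ => lt_iff_lt_of_le_iff_le (hf e.2 e'.2)).le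
  · obtain ⟨w₀, hw₀, hle⟩ := exists_collapse_crossings_le E p hq hne hS
    obtain ⟨f, hf⟩ := exists_layout_le_iff (collapse_injective (S := S) (w₀ := w₀) hq)
    refine ⟨f, ?_, (isContiguous_collapse hq hw₀).of_le_iff hf,
      fun T hST hT => (hT.collapse hq hw₀ hST).of_le_iff hf⟩
    rwa [crossings_congr p fun e _ e' _ => lt_iff_lt_of_le_iff_le (hf e.2 e'.2)]

theorem exists_layout_forall_contiguous [Fintype V] [DecidableEq V] (E : Finset (V × W))
    (p : V → α) (f₀ : W ≃ Fin (Fintype.card W)) (S : V → Finset W)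
    (hS : ∀ v, ∀ e ∈ E, e.2 ∈ S v → e.1 = v)
    (hS_disj : Pairwise (Function.onFun Disjoint S)) :
    ∃ f : W ≃ Fin (Fintype.card W), crossings p f E ≤ crossings p f₀ E ∧
      ∀ v, IsContiguous f (S v) := by
  suffices ∀ s : Finset V, ∃ f : W ≃ Fin (Fintype.card W),
      crossings p f E ≤ crossings p f₀ E ∧ ∀ v ∈ s, IsContiguous f (S v) by
    obtain ⟨f, hf, hfS⟩ := this univ
    exact ⟨f, hf, fun v => hfS v (mem_univ v)⟩
  intro s
  induction s using Finset.induction_on with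
  | empty => exact ⟨f₀, le_rfl, by simp⟩
  | insert a s ha ih =>
    obtain ⟨f, hf, hfS⟩ := ih
    obtain ⟨f', hf', hf'a, hf'S⟩ := exists_layout_contiguous_of_pendant E p f.injective (hS a)
    refine ⟨f', hf'.trans hf, fun v hv => ?_⟩
    rcases mem_insert.1 hv with rfl | hv
    · exact hf'a
    · exact hf'S _ (hS_disj (ne_of_mem_of_not_mem hv ha).symm) (hfS v hv)

end Layouts

theorem crossNum_eq_crossings {V W : Type} [Fintype V] [Fintype W] (E : Finset (V × W))
    (fV : V ≃ Fin (Fintype.card V)) (fW : W ≃ Fin (Fintype.card W)) :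
    crossNum E fV fW = crossings fV fW E :=
  rfl

theorem exists_crossNum_eq_bcr {V W : Type} [Fintype V] [Fintype W] (E : Finset (V × W)) :
    ∃ fV fW, crossNum E fV fW = bcr E :=
  Nat.sInf_mem (s := {k | ∃ fV fW, crossNum E fV fW = k})
    ⟨_, Fintype.equivFin V, Fintype.equivFin W, rfl⟩

theorem bcr_le_crossNum {V W : Type} [Fintype V] [Fintype W] (E : Finset (V × W))
    (fV : V ≃ Fin (Fintype.card V)) (fW : W ≃ Fin (Fintype.card W)) :
    bcr E ≤ crossNum E fV fW :=
  Nat.sInf_le ⟨fV, fW, rfl⟩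

theorem IsLeaf.eq_of_adj {E : Finset (X × Y)} {u a b : X ⊕ Y} (hu : IsLeaf E u)
    (ha : (biGraph E).Adj u a) (hb : (biGraph E).Adj u b) : a = b :=
  (SimpleGraph.degree_eq_one_iff_existsUnique_adj.1 hu).unique ha hb

instance (E : Finset (X × Y)) : DecidablePred (IsLeaf E) :=
  fun _ => inferInstanceAs (Decidable (_ = 1))

def rightLeaves (E : Finset (X × Y)) (x : X) : Finset Y :=
  {y | (x, y) ∈ E ∧ IsLeaf E (Sum.inr y)}

def leftLeaves (E : Finset (X × Y)) (y : Y) : Finset X :=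
  {x | (x, y) ∈ E ∧ IsLeaf E (Sum.inl x)}

theorem rightLeaves_pendant (E : Finset (X × Y)) (x : X) :
    ∀ e ∈ E, e.2 ∈ rightLeaves E x → e.1 = x := by
  rintro ⟨x', y⟩ he hy
  simp only [rightLeaves, mem_filter, mem_univ, true_and] at hy
  exact Sum.inl.inj (hy.2.eq_of_adj he hy.1)

theorem leftLeaves_pendant (E : Finset (X × Y)) (y : Y) :
    ∀ e ∈ E.image Prod.swap, e.2 ∈ leftLeaves E y → e.1 = y := by
  rintro _ he' hx
  obtain ⟨⟨x, y'⟩, he, rfl⟩ := mem_image.1 he'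
  simp only [leftLeaves, Prod.snd_swap, mem_filter, mem_univ, true_and] at hx
  exact Sum.inr.inj (hx.2.eq_of_adj he hx.1)

theorem pairwise_disjoint_rightLeaves (E : Finset (X × Y)) :
    Pairwise (Function.onFun Disjoint (rightLeaves E)) := by
  refine fun x x' hxx' => disjoint_left.2 fun y hy hy' => hxx' ?_
  refine rightLeaves_pendant E x' (x, y) ?_ hy'
  simp only [rightLeaves, mem_filter] at hy
  exact hy.2.1

theorem pairwise_disjoint_leftLeaves (E : Finset (X × Y)) :
    Pairwise (Function.onFun Disjoint (leftLeaves E)) := by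
  refine fun y y' hyy' => disjoint_left.2 fun x hx hx' => hyy' ?_
  refine leftLeaves_pendant E y' (y, x) ?_ hx'
  simp only [leftLeaves, mem_filter] at hx
  exact mem_image_of_mem Prod.swap hx.2.1

/-- Every bipartite graph has an optimal two-layer drawing in which, for every non-leaf
vertex `v`, the leaves adjacent to `v` occupy consecutive positions in their layer. -/
theorem exists_optimal_drawing_leaves_consecutive (X Y : Type) [Fintype X] [Fintype Y]
    [DecidableEq X] [DecidableEq Y] (E : Finset (X × Y)) :
    ∃ (fX : X ≃ Fin (Fintype.card X)) (fY : Y ≃ Fin (Fintype.card Y)),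
      crossNum E fX fY = bcr E ∧
      (∀ x : X, ¬ IsLeaf E (Sum.inl x) →
        IsConsecutive {n : ℕ | ∃ y : Y,
          (x, y) ∈ E ∧ IsLeaf E (Sum.inr y) ∧ (fY y : ℕ) = n}) ∧
      (∀ y : Y, ¬ IsLeaf E (Sum.inr y) →
        IsConsecutive {n : ℕ | ∃ x : X,
          (x, y) ∈ E ∧ IsLeaf E (Sum.inl x) ∧ (fX x : ℕ) = n}) := by
  obtain ⟨fX₀, fY₀, h₀⟩ := exists_crossNum_eq_bcr E
  obtain ⟨fY, hY, hYS⟩ := exists_layout_forall_contiguous E fX₀ fY₀ (rightLeaves E)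
    (rightLeaves_pendant E) (pairwise_disjoint_rightLeaves E)
  obtain ⟨fX, hX, hXS⟩ := exists_layout_forall_contiguous (E.image Prod.swap) fY fX₀
    (leftLeaves E) (leftLeaves_pendant E) (pairwise_disjoint_leftLeaves E)
  refine ⟨fX, fY, le_antisymm ?_ (bcr_le_crossNum E fX fY), fun x _ => ?_, fun y _ => ?_⟩
  · calc crossNum E fX fY
        _ = crossings fY fX (E.image Prod.swap) := by
          rw [crossNum_eq_crossings, crossings_image_swap]
        _ ≤ crossings fY fX₀ (E.image Prod.swap) := hX
        _ = crossings fX₀ fY E := crossings_image_swap _ _ _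
        _ ≤ crossings fX₀ fY₀ E := hY
        _ = bcr E := by rw [← crossNum_eq_crossings, h₀]
  · simpa [rightLeaves, and_assoc] using (hYS x).isConsecutive
  · simpa [leftLeaves, and_assoc] using (hXS y).isConsecutive
end
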